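/- arXiv:2009.05291 — 4 statements merged into one kernel-verified Lean document; each statement's English description precedes it below -/
import Mathlib

section
/- Let A = ℂ[u,v,x_1,...,x_n]/(uv − f_1^{a_1}···f_t^{a_t}), where the f_i ∈ ℂ[x_1,...,x_n] are irreducible and pairwise coprime and each a_i ≥ 1. Then A is a normal integral domain. -/
universe u v

open MvPolynomial

/-- The ideal `(uv - f₁^{a₁} ⋯ f_t^{a_t})` of the polynomial ring `ℂ[u,v,x₁,…,xₙ]`,
where `u, v` are the two variables indexed by `Fin 2` and `x₁, …, xₙ` are the variables
indexed by `Fin n`, and the `fᵢ` are polynomials in the variables `x₁, …, xₙ` only. -/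
noncomputable def hyperIdeal (n t : ℕ) (f : Fin t → MvPolynomial (Fin n) ℂ)
    (a : Fin t → ℕ) : Ideal (MvPolynomial (Fin 2 ⊕ Fin n) ℂ) :=
  Ideal.span
    {X (Sum.inl 0) * X (Sum.inl 1) - ∏ i, (rename Sum.inr (f i)) ^ a i}

/-- The hypersurface ring `A = ℂ[u,v,x₁,…,xₙ]/(uv - f₁^{a₁} ⋯ f_t^{a_t})`. -/
abbrev HyperRing (n t : ℕ) (f : Fin t → MvPolynomial (Fin n) ℂ) (a : Fin t → ℕ) : Type :=
  MvPolynomial (Fin 2 ⊕ Fin n) ℂ ⧸ hyperIdeal n t f a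

/-- The image of the variable `u` in the hypersurface ring `A`. -/
noncomputable def uElem (n t : ℕ) (f : Fin t → MvPolynomial (Fin n) ℂ) (a : Fin t → ℕ) :
    HyperRing n t f a :=
  Ideal.Quotient.mk (hyperIdeal n t f a) (X (Sum.inl 0))

/-!
Write `A = R[u,v]/(uv - g)` with `R = ℂ[x₁,…,xₙ]`, a normal domain, and
`g = f₁^{a₁} ⋯ f_t^{a_t} ≠ 0`. Sending `u ↦ T`, `v ↦ g T⁻¹` embeds `A` into the Laurent
polynomial ring `R[T,T⁻¹]` (compare coefficients of a normal form `b(u) + c(v)`), so `A` is a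
domain, and this embedding identifies `A[u⁻¹]` with `R[T,T⁻¹]`, a localization of the normal
ring `R[T]`. By the symmetry `u ↔ v`, also `A[v⁻¹]` is normal. Finally `A/uA ≅ (R/g)[v]`, so `v`
is a nonzerodivisor modulo `u`; this forces `A = A[u⁻¹] ∩ A[v⁻¹]` inside the fraction field, and
an intersection of normal overrings is normal.
-/

open LaurentPolynomial (T)
open scoped Polynomial LaurentPolynomial nonZeroDivisors

theorem pow_dvd_of_pow_dvd_pow_mul {M : Type*} [CommMonoidWithZero M] [IsCancelMulZero M]
    {x y : M} (hx : x ≠ 0) (hxy : ∀ a, x ∣ y * a → x ∣ a) {a : M} {m k : ℕ}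
    (h : x ^ m ∣ y ^ k * a) : x ^ m ∣ a := by
  have hdvd (k : ℕ) (a : M) (h : x ∣ y ^ k * a) : x ∣ a := by
    induction k generalizing a with
    | zero => simpa using h
    | succ k ih => exact hxy a (ih _ (by rwa [pow_succ, mul_assoc] at h))
  induction m generalizing a with
  | zero => simp
  | succ m ih =>
    obtain ⟨a', rfl⟩ := hdvd k a (dvd_trans (dvd_pow_self x m.succ_ne_zero) h)
    rw [pow_succ'] at h ⊢
    rw [mul_left_comm] at h
    exact mul_dvd_mul_left x (ih ((mul_dvd_mul_iff_left hx).mp h))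

theorem IsIntegrallyClosed.of_localization_away {A : Type*} [CommRing A] [IsDomain A] {x y : A}
    (hx : x ≠ 0) (hy : y ≠ 0) (hxy : ∀ a, x ∣ y * a → x ∣ a)
    (hAx : IsIntegrallyClosed (Localization.Away x))
    (hAy : IsIntegrallyClosed (Localization.Away y)) :
    IsIntegrallyClosed A := by
  have hle (i : Fin 2) : Submonoid.powers (![x, y] i) ≤ A⁰ :=
    powers_le_nonZeroDivisors_of_noZeroDivisors (by fin_cases i <;> assumption)
  refine of_localization_submonoid _ hle (Fin.forall_fin_two.mpr ⟨hAx, hAy⟩) ?_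
  refine eq_bot_iff.mpr fun z hz => ?_
  rw [Algebra.mem_iInf, Fin.forall_fin_two] at hz
  obtain ⟨⟨a, _, ⟨m, rfl⟩, rfl⟩, ⟨b, _, ⟨k, rfl⟩, hz⟩⟩ := hz
  rw [IsLocalization.mk'_eq_iff_eq, (IsFractionRing.injective A (FractionRing A)).eq_iff] at hz
  obtain ⟨c, rfl⟩ := pow_dvd_of_pow_dvd_pow_mul hx hxy (m := m) (k := k) ⟨b, by simpa using hz⟩
  exact ⟨c, (IsLocalization.mk'_mul_cancel_left c _).symm⟩

instance LaurentPolynomial.isIntegrallyClosed {R : Type*} [CommRing R] [IsDomain R]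
    [IsIntegrallyClosed R] : IsIntegrallyClosed R[T;T⁻¹] :=
  isIntegrallyClosed_of_isLocalization _ (Submonoid.powers (Polynomial.X : R[X]))
    (powers_le_nonZeroDivisors_of_noZeroDivisors Polynomial.X_ne_zero)

namespace Polynomial

variable {R : Type*} [Semiring R]

theorem coeff_toLaurent_natCast (p : R[X]) (n : ℕ) : p.toLaurent.coeff n = p.coeff n := by
  rw [LaurentPolynomial.coeff_toLaurent]
  exact Finsupp.mapDomain_apply Nat.castEmbedding.injective _ n

theorem coeff_toLaurent_of_neg (p : R[X]) {n : ℤ} (hn : n < 0) : p.toLaurent.coeff n = 0 := by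
  rw [LaurentPolynomial.coeff_toLaurent]
  exact Finsupp.mapDomain_of_notMem_range _ _ (by rintro ⟨m, rfl⟩; simp at hn; omega)

end Polynomial

abbrev UVRing {R : Type*} [CommRing R] (g : R) : Type _ :=
  MvPolynomial (Fin 2) R ⧸ Ideal.span {(X 0 * X 1 - C g : MvPolynomial (Fin 2) R)}

namespace UVRing

variable {R : Type*} [CommRing R] {g : R}

noncomputable def u : UVRing g := Ideal.Quotient.mk _ (X 0)

noncomputable def v : UVRing g := Ideal.Quotient.mk _ (X 1)

theorem u_mul_v : (u : UVRing g) * v = algebraMap R (UVRing g) g := by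
  rw [u, v, ← map_mul, ← Ideal.Quotient.mk_algebraMap, Ideal.Quotient.eq, algebraMap_eq]
  exact Ideal.subset_span rfl

section lift

variable {S : Type*} [CommRing S] [Algebra R S] (a b : S) (hab : a * b = algebraMap R S g)

noncomputable def lift : UVRing g →ₐ[R] S :=
  Ideal.Quotient.liftₐ _ (MvPolynomial.aeval ![a, b]) fun p hp => by
    obtain ⟨c, rfl⟩ := Ideal.mem_span_singleton'.mp hp
    simp [hab]

@[simp] theorem lift_u : lift a b hab u = a := by
  show MvPolynomial.aeval ![a, b] (X 0) = a
  simp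

@[simp] theorem lift_v : lift a b hab v = b := by
  show MvPolynomial.aeval ![a, b] (X 1) = b
  simp

end lift

@[ext] theorem algHom_ext {S : Type*} [CommRing S] [Algebra R S] {φ ψ : UVRing g →ₐ[R] S}
    (hu : φ u = ψ u) (hv : φ v = ψ v) : φ = ψ :=
  Ideal.Quotient.algHom_ext R <| MvPolynomial.algHom_ext fun i => by fin_cases i <;> assumption

theorem v_mul_u : (v : UVRing g) * u = algebraMap R (UVRing g) g := by
  rw [mul_comm, u_mul_v]

noncomputable def swap : UVRing g ≃ₐ[R] UVRing g :=
  AlgEquiv.ofAlgHom (lift v u v_mul_u) (lift v u v_mul_u) (by ext <;> simp) (by ext <;> simp)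

@[simp] theorem swap_u : swap (u : UVRing g) = v := lift_u _ _ v_mul_u

@[simp] theorem swap_v : swap (v : UVRing g) = u := lift_v _ _ v_mul_u

@[simp] theorem swap_aeval_u (p : R[X]) :
    swap (Polynomial.aeval u p) = Polynomial.aeval (v : UVRing g) p := by
  rw [← swap_u, Polynomial.aeval_algEquiv, AlgHom.comp_apply]
  rfl

@[simp] theorem swap_aeval_v (p : R[X]) :
    swap (Polynomial.aeval v p) = Polynomial.aeval (u : UVRing g) p := by
  rw [← swap_v, Polynomial.aeval_algEquiv, AlgHom.comp_apply]
  rfl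

theorem aeval_v_mul_u (c : R[X]) :
    Polynomial.aeval v c * (u : UVRing g) =
      Polynomial.aeval u (.C (c.coeff 0) * .X) + Polynomial.aeval v (.C g * c.divX) := by
  conv_lhs => rw [← c.X_mul_divX_add]
  simp only [map_add, map_mul, Polynomial.aeval_X, Polynomial.aeval_C]
  linear_combination Polynomial.aeval v c.divX * u_mul_v (g := g)

theorem aeval_u_mul_v (b : R[X]) :
    Polynomial.aeval u b * (v : UVRing g) =
      Polynomial.aeval v (.C (b.coeff 0) * .X) + Polynomial.aeval u (.C g * b.divX) := by
  simpa using congrArg swap (aeval_v_mul_u (g := g) b)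

theorem exists_eq_aeval_add_aeval (w : UVRing g) :
    ∃ b c : R[X], w = Polynomial.aeval u b + Polynomial.aeval v c := by
  obtain ⟨p, rfl⟩ := Ideal.Quotient.mk_surjective w
  induction p using MvPolynomial.induction_on with
  | C a => exact ⟨.C a, 0, by rw [Polynomial.aeval_C, map_zero, add_zero]; rfl⟩
  | add p q hp hq =>
    obtain ⟨b₁, c₁, h₁⟩ := hp
    obtain ⟨b₂, c₂, h₂⟩ := hq
    exact ⟨b₁ + b₂, c₁ + c₂, by rw [map_add, h₁, h₂]; simp only [map_add]; ring⟩
  | mul_X p i hp =>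
    obtain ⟨b, c, h⟩ := hp
    rw [map_mul, h]
    fin_cases i
    · refine ⟨.X * b + .C (c.coeff 0) * .X, .C g * c.divX, ?_⟩
      change (_ + _) * u = _
      rw [add_mul, aeval_v_mul_u]
      simp only [map_add, map_mul, Polynomial.aeval_X]
      ring
    · refine ⟨.C g * b.divX, .X * c + .C (b.coeff 0) * .X, ?_⟩
      change (_ + _) * v = _
      rw [add_mul, aeval_u_mul_v]
      simp only [map_add, map_mul, Polynomial.aeval_X]
      ring

noncomputable def toLaurent : UVRing g →ₐ[R] R[T;T⁻¹] :=
  lift (T 1) (LaurentPolynomial.C g * T (-1)) <| by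
    rw [mul_left_comm, ← LaurentPolynomial.T_add, add_neg_cancel, LaurentPolynomial.T_zero,
      mul_one, LaurentPolynomial.C_eq_algebraMap]

theorem toLaurent_u : toLaurent (u : UVRing g) = T 1 := lift_u _ _ _

theorem toLaurent_aeval_u (b : R[X]) :
    toLaurent (Polynomial.aeval (u : UVRing g) b) = b.toLaurent := by
  rw [← Polynomial.aeval_algHom_apply, toLaurent_u, ← Polynomial.toLaurentAlg_apply,
    ← Polynomial.toLaurent_X, ← Polynomial.toLaurentAlg_apply, Polynomial.aeval_algHom_apply,
    Polynomial.aeval_X_left_apply]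

theorem toLaurent_aeval_v (c : R[X]) :
    toLaurent (Polynomial.aeval (v : UVRing g) c) =
      LaurentPolynomial.invert (c.comp (.C g * .X)).toLaurent := by
  rw [← Polynomial.aeval_algHom_apply, toLaurent, lift_v, Polynomial.comp_eq_aeval]
  induction c using Polynomial.induction_on' with
  | add p q hp hq => simp only [map_add, hp, hq]
  | monomial n a => simp [mul_pow, LaurentPolynomial.T_pow]

theorem toLaurent_injective (hg : g ∈ R⁰) :
    Function.Injective (toLaurent : UVRing g →ₐ[R] R[T;T⁻¹]) := by
  refine (injective_iff_map_eq_zero _).mpr fun w hw => ?_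
  obtain ⟨b, c, rfl⟩ := exists_eq_aeval_add_aeval w
  rw [map_add, toLaurent_aeval_u, toLaurent_aeval_v] at hw
  have hcoeff (m : ℤ) :
      b.toLaurent.coeff m + (c.comp (.C g * .X)).toLaurent.coeff (-m) = 0 := by
    simpa only [AddMonoidAlgebra.coeff_add, AddMonoidAlgebra.coeff_zero, Finsupp.add_apply,
      LaurentPolynomial.invert_apply, Finsupp.coe_zero, Pi.zero_apply]
      using congrArg (·.coeff m) hw
  have hb (n : ℕ) : b.coeff (n + 1) = 0 := by
    have := hcoeff (n + 1 : ℕ)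
    rwa [b.coeff_toLaurent_natCast, Polynomial.coeff_toLaurent_of_neg _ (by omega),
      add_zero] at this
  have hc (n : ℕ) : c.coeff (n + 1) = 0 := by
    have := hcoeff (-(n + 1 : ℕ))
    rwa [b.coeff_toLaurent_of_neg (by omega), neg_neg, Polynomial.coeff_toLaurent_natCast,
      Polynomial.comp_C_mul_X_coeff, zero_add,
      mul_right_mem_nonZeroDivisors_eq_zero_iff (pow_mem hg _)] at this
  have h0 : b.coeff 0 + c.coeff 0 = 0 := by
    have := hcoeff 0
    rwa [neg_zero, ← Nat.cast_zero, Polynomial.coeff_toLaurent_natCast,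
      Polynomial.coeff_toLaurent_natCast, Polynomial.comp_C_mul_X_coeff, pow_zero,
      mul_one] at this
  have hbC : b = .C (b.coeff 0) := Polynomial.ext fun n => by cases n <;> simp [hb]
  have hcC : c = .C (c.coeff 0) := Polynomial.ext fun n => by cases n <;> simp [hc]
  rw [hbC, hcC]
  simp [← map_add, h0]

theorem algebraMap_ne_zero (hg : g ≠ 0) : algebraMap R (UVRing g) g ≠ 0 := fun h =>
  hg (by simpa using congrArg (·.coeff 0) (congrArg toLaurent h))

noncomputable def modU : UVRing g →ₐ[R] (R ⧸ Ideal.span {g})[X] :=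
  lift 0 .X <| by
    rw [zero_mul, Polynomial.algebraMap_apply, Ideal.Quotient.algebraMap_eq,
      Ideal.Quotient.eq_zero_iff_mem.mpr (Ideal.mem_span_singleton_self g), map_zero]

theorem u_dvd_of_modU_eq_zero {w : UVRing g} (hw : modU w = 0) : u ∣ w := by
  obtain ⟨b, c, rfl⟩ := exists_eq_aeval_add_aeval w
  have hmap : (.C (b.coeff 0) + c).map (Ideal.Quotient.mk (Ideal.span {g})) = 0 := by
    rw [← hw, map_add, ← Polynomial.aeval_algHom_apply, ← Polynomial.aeval_algHom_apply, modU,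
      lift_u, lift_v, ← Polynomial.coeff_zero_eq_aeval_zero', Polynomial.aeval_X_left_eq_map,
      Polynomial.map_add, Polynomial.map_C]
    rfl
  obtain ⟨d, hd⟩ : ∃ d, d * .C g = .C (b.coeff 0) + c := by
    rw [← Ideal.mem_span_singleton', ← Set.image_singleton, ← Ideal.map_span,
      ← Ideal.mk_ker (I := Ideal.span {g}), ← Polynomial.ker_mapRingHom]
    exact hmap
  refine ⟨Polynomial.aeval u b.divX + v * Polynomial.aeval v d, ?_⟩
  conv_lhs => rw [← b.X_mul_divX_add]
  have hd' := congrArg (Polynomial.aeval (v : UVRing g)) hd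
  simp only [map_add, map_mul, Polynomial.aeval_X, Polynomial.aeval_C] at hd' ⊢
  linear_combination -hd' - Polynomial.aeval v d * u_mul_v (g := g)

theorem u_dvd_of_u_dvd_v_mul {w : UVRing g} (h : u ∣ v * w) : u ∣ w := by
  refine u_dvd_of_modU_eq_zero (Polynomial.isRegular_X.left ?_)
  obtain ⟨z, hz⟩ := h
  have hu : modU (u : UVRing g) = 0 := lift_u _ _ _
  have hv : modU (v : UVRing g) = .X := lift_v _ _ _
  show .X * modU w = .X * 0
  rw [← hv, ← map_mul, hz, map_mul, hu, zero_mul, mul_zero]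

theorem isLocalization_away_u (hg : g ∈ R⁰) :
    letI := (toLaurent : UVRing g →ₐ[R] R[T;T⁻¹]).toRingHom.toAlgebra
    IsLocalization.Away (u : UVRing g) R[T;T⁻¹] :=
  letI := (toLaurent : UVRing g →ₐ[R] R[T;T⁻¹]).toRingHom.toAlgebra
  { map_units := by
      rintro ⟨_, n, rfl⟩
      show IsUnit (toLaurent (u ^ n))
      rw [map_pow, toLaurent_u]
      exact (LaurentPolynomial.isUnit_T 1).pow n
    surj f := by
      obtain ⟨n, p, hp⟩ := LaurentPolynomial.exists_T_pow f
      refine ⟨(Polynomial.aeval u p, ⟨u ^ n, n, rfl⟩), ?_⟩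
      show f * toLaurent (u ^ n) = toLaurent (Polynomial.aeval u p)
      rw [toLaurent_aeval_u, hp, map_pow, toLaurent_u, LaurentPolynomial.T_pow, mul_one]
    exists_of_eq h := ⟨1, congrArg _ (toLaurent_injective hg h)⟩ }

section Normal

variable [IsDomain R]

theorem isDomain (hg : g ≠ 0) : IsDomain (UVRing g) :=
  (toLaurent_injective (mem_nonZeroDivisors_of_ne_zero hg)).isDomain

variable [IsIntegrallyClosed R]

theorem isIntegrallyClosed_away_u (hg : g ≠ 0) :
    IsIntegrallyClosed (Localization.Away (u : UVRing g)) :=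
  letI := (toLaurent : UVRing g →ₐ[R] R[T;T⁻¹]).toRingHom.toAlgebra
  haveI := isLocalization_away_u (mem_nonZeroDivisors_of_ne_zero hg)
  LaurentPolynomial.isIntegrallyClosed.of_equiv
    (IsLocalization.algEquiv (.powers (u : UVRing g)) R[T;T⁻¹] (Localization.Away u)).toRingEquiv

theorem isIntegrallyClosed_away_v (hg : g ≠ 0) :
    IsIntegrallyClosed (Localization.Away (v : UVRing g)) :=
  (isIntegrallyClosed_away_u hg).of_equiv <| IsLocalization.ringEquivOfRingEquiv
    (M := .powers (u : UVRing g)) (T := .powers (v : UVRing g)) _ _ swap.toRingEquiv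
    (by rw [Submonoid.map_powers]; simp)

theorem isIntegrallyClosed (hg : g ≠ 0) : IsIntegrallyClosed (UVRing g) :=
  haveI := isDomain hg
  have huv := u_mul_v (g := g) ▸ algebraMap_ne_zero hg
  .of_localization_away (left_ne_zero_of_mul huv) (right_ne_zero_of_mul huv)
    (fun _ => u_dvd_of_u_dvd_v_mul) (isIntegrallyClosed_away_u hg) (isIntegrallyClosed_away_v hg)

end Normal

end UVRing

noncomputable def hyperRingEquiv (n t : ℕ) (f : Fin t → MvPolynomial (Fin n) ℂ)
    (a : Fin t → ℕ) : HyperRing n t f a ≃+* UVRing (∏ i, f i ^ a i) :=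
  Ideal.quotientEquiv _ _ (sumAlgEquiv ℂ (Fin 2) (Fin n)).toRingEquiv <| by
    have (p : MvPolynomial (Fin n) ℂ) : sumAlgEquiv ℂ (Fin 2) (Fin n) (rename Sum.inr p) = C p :=
      AlgHom.congr_fun (sumAlgEquiv_comp_rename_inr ℂ (Fin 2) (Fin n)) p
    simp [hyperIdeal, Ideal.map_span, this]

theorem hyperRing_isDomain_isIntegrallyClosed_general (n t : ℕ)
    (f : Fin t → MvPolynomial (Fin n) ℂ) (hirr : ∀ i, Irreducible (f i))
    (a : Fin t → ℕ) :
    IsDomain (HyperRing n t f a) ∧ IsIntegrallyClosed (HyperRing n t f a) := by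
  have hg : ∏ i, f i ^ a i ≠ 0 :=
    Finset.prod_ne_zero_iff.mpr fun i _ => pow_ne_zero _ (hirr i).ne_zero
  have := UVRing.isDomain hg
  exact ⟨(hyperRingEquiv n t f a).toMulEquiv.isDomain _,
    (UVRing.isIntegrallyClosed hg).of_equiv (hyperRingEquiv n t f a).symm⟩

/-- **The hypersurface ring `A = ℂ[u,v,x₁,…,xₙ]/(uv - f₁^{a₁} ⋯ f_t^{a_t})` is a normal
integral domain**, where the `fᵢ ∈ ℂ[x₁,…,xₙ]` are irreducible and pairwise coprime and
each `aᵢ ≥ 1`. -/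
theorem hyperRing_isDomain_isIntegrallyClosed (n t : ℕ)
    (f : Fin t → MvPolynomial (Fin n) ℂ) (hirr : ∀ i, Irreducible (f i))
    (hcop : ∀ i j, i ≠ j → IsRelPrime (f i) (f j)) (a : Fin t → ℕ) (ha : ∀ i, 1 ≤ a i) :
    IsDomain (HyperRing n t f a) ∧ IsIntegrallyClosed (HyperRing n t f a) :=
  hyperRing_isDomain_isIntegrallyClosed_general n t f hirr a
end

section
/- Let A = ℂ[u,v,x_1,...,x_n]/(uv − f_1^{a_1}···f_t^{a_t}) with f_i non-constant, irreducible and pairwise coprime polynomials, a_i ≥ 1. Then the group of units of A is exactly ℂ^×. -/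
universe u v

open MvPolynomial

/-!
Write `R = ℂ[x]` and `F = ∏ fᵢ^{aᵢ}`. Sending `u ↦ T`, `v ↦ F T⁻¹` embeds `A = R[u,v]/(uv - F)`
into the Laurent ring `R[T, T⁻¹]`: multiplying by a power of `u` turns every element of `A` into
a polynomial in `u` alone, and `u` is a nonzerodivisor in `A` because the prime `u` does not
divide `uv - F`. The units of `R[T, T⁻¹]` are the `c Tᵏ` with `c ∈ ℂˣ`, so a unit `y` of `A`
satisfies `u^{k⁻} y = c u^{k⁺}`. As `F` has a zero, some ring map `A → ℂ` kills `u`, so `u` is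
not a unit of `A`; this forces `k = 0` and `y = c`.
-/

-- `w` and `w⁻¹` come from polynomials whose product is a power of the prime `X`.
theorem LaurentPolynomial.exists_C_mul_T_of_isUnit {R : Type*} [CommRing R] [IsDomain R]
    {w : LaurentPolynomial R} (hw : IsUnit w) :
    ∃ (r : R) (k : ℤ), IsUnit r ∧ w = C r * T k := by
  obtain ⟨z, hz⟩ := hw.exists_right_inv
  obtain ⟨m, f, hf⟩ := exists_T_pow w
  obtain ⟨l, g, hg⟩ := exists_T_pow z
  have hfg : f * g = Polynomial.X ^ (m + l) := by
    apply Polynomial.toLaurent_injective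
    rw [map_mul, hf, hg, Polynomial.toLaurent_X_pow, mul_mul_mul_comm, hz, one_mul, ← T_add]
    push_cast
    ring_nf
  obtain ⟨i, -, hi⟩ := (dvd_prime_pow Polynomial.prime_X (m + l)).mp ⟨g, hfg.symm⟩
  obtain ⟨v, hv⟩ := hi.symm
  obtain ⟨r, hr, hrv⟩ := Polynomial.isUnit_iff.mp v.isUnit
  refine ⟨r, i - m, hr, ?_⟩
  have hwf : w = Polynomial.toLaurent f * T (-m) := by
    rw [hf, mul_T_assoc, add_neg_cancel, T_zero, mul_one]
  rw [hwf, ← hv, ← hrv, map_mul, Polynomial.toLaurent_X_pow, Polynomial.toLaurent_C,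
    mul_comm (T i), mul_T_assoc, sub_eq_add_neg]

theorem Prime.dvd_of_dvd_pow_mul {M : Type*} [CommMonoidWithZero M] [IsCancelMulZero M]
    {π g p : M} (hπ : Prime π) (hg : ¬π ∣ g) {N : ℕ} (h : g ∣ π ^ N * p) : g ∣ p := by
  obtain ⟨q, hq⟩ := h
  obtain ⟨q', rfl⟩ := hπ.pow_dvd_of_dvd_mul_left N hg ⟨p, hq.symm⟩
  refine ⟨q', mul_left_cancel₀ (pow_ne_zero N hπ.ne_zero) ?_⟩
  rw [hq, mul_left_comm]

theorem MvPolynomial.exists_eval_eq_zero_of_not_isUnit {σ K : Type*} [Field K] [IsAlgClosed K]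
    [Finite σ] {p : MvPolynomial σ K} (hp : ¬IsUnit p) : ∃ x : σ → K, eval x p = 0 := by
  obtain ⟨m, hm, hpm⟩ :=
    Ideal.exists_le_maximal (Ideal.span {p}) (mt Ideal.span_singleton_eq_top.mp hp)
  obtain ⟨x, rfl⟩ := isMaximal_iff_eq_vanishingIdeal_singleton.mp hm
  exact ⟨x, (mem_vanishingIdeal_singleton_iff x p).mp (hpm (Ideal.mem_span_singleton_self p))⟩

namespace UVHypersurface

open LaurentPolynomial hiding C

variable {K σ : Type*} [Field K]

noncomputable def uvIdeal (F : MvPolynomial σ K) : Ideal (MvPolynomial (Fin 2 ⊕ σ) K) :=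
  Ideal.span {X (Sum.inl 0) * X (Sum.inl 1) - rename Sum.inr F}

theorem uvIdeal_le_ker {S : Type*} [CommRing S] [Algebra K S] {F : MvPolynomial σ K}
    {φ : MvPolynomial (Fin 2 ⊕ σ) K →ₐ[K] S}
    (hφ : φ (X (Sum.inl 0) * X (Sum.inl 1) - rename Sum.inr F) = 0) :
    uvIdeal F ≤ RingHom.ker φ :=
  (Ideal.span_singleton_le_iff_mem _).mpr hφ

theorem not_X_dvd_uv_sub {F : MvPolynomial σ K} (hF : F ≠ 0) :
    ¬(X (Sum.inl 0) : MvPolynomial (Fin 2 ⊕ σ) K) ∣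
      X (Sum.inl 0) * X (Sum.inl 1) - rename Sum.inr F := by
  rintro ⟨q, hq⟩
  have h0 := congrArg
    (aeval (Sum.elim 0 X) : MvPolynomial (Fin 2 ⊕ σ) K →ₐ[K] MvPolynomial σ K) hq
  exact hF (by simpa [bind₁_rename] using h0)

noncomputable def polyInU : Polynomial (MvPolynomial σ K) →+* MvPolynomial (Fin 2 ⊕ σ) K :=
  Polynomial.eval₂RingHom (rename Sum.inr).toRingHom (X (Sum.inl 0))

@[simp]
theorem polyInU_C (r : MvPolynomial σ K) : polyInU (Polynomial.C r) = rename Sum.inr r :=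
  Polynomial.eval₂_C _ _

@[simp]
theorem polyInU_X : polyInU (Polynomial.X : Polynomial (MvPolynomial σ K)) = X (Sum.inl 0) :=
  Polynomial.eval₂_X _ _

-- Each factor `v` is absorbed by one extra factor `u`, as `uv = F`.
theorem exists_X_pow_mul_eq_polyInU (F : MvPolynomial σ K) (p : MvPolynomial (Fin 2 ⊕ σ) K) :
    ∃ (N : ℕ) (r : Polynomial (MvPolynomial σ K)),
      Ideal.Quotient.mk (uvIdeal F) (X (Sum.inl 0) ^ N * p) =
        Ideal.Quotient.mk (uvIdeal F) (polyInU r) := by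
  set π := Ideal.Quotient.mk (uvIdeal F)
  have huv : π (X (Sum.inl 0)) * π (X (Sum.inl 1)) = π (rename Sum.inr F) := by
    rw [← map_mul, Ideal.Quotient.eq]
    exact Ideal.subset_span rfl
  induction p using MvPolynomial.induction_on with
  | C a => exact ⟨0, Polynomial.C (C a), by simp⟩
  | add p q hp hq =>
    obtain ⟨N, r, hr⟩ := hp
    obtain ⟨M, s, hs⟩ := hq
    refine ⟨N + M, r * Polynomial.X ^ M + s * Polynomial.X ^ N, ?_⟩
    simp only [map_mul, map_pow, map_add, polyInU_X] at hr hs ⊢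
    linear_combination π (X (Sum.inl 0)) ^ M * hr + π (X (Sum.inl 0)) ^ N * hs
  | mul_X p s hp =>
    obtain ⟨N, r, hr⟩ := hp
    simp only [map_mul, map_pow] at hr ⊢
    rcases s with j | i
    · match j with
      | 0 =>
        refine ⟨N, r * Polynomial.X, ?_⟩
        simp only [map_mul, polyInU_X]
        linear_combination π (X (Sum.inl 0)) * hr
      | 1 =>
        refine ⟨N + 1, r * Polynomial.C F, ?_⟩
        simp only [map_mul, polyInU_C]
        linear_combination π (X (Sum.inl 0)) ^ N * π p * huv + π (rename Sum.inr F) * hr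
    · refine ⟨N, r * Polynomial.C (X i), ?_⟩
      simp only [map_mul, polyInU_C, rename_X]
      linear_combination π (X (Sum.inr i)) * hr

noncomputable def laurentHom (F : MvPolynomial σ K) :
    MvPolynomial (Fin 2 ⊕ σ) K →ₐ[K] LaurentPolynomial (MvPolynomial σ K) :=
  aeval (Sum.elim ![T 1, LaurentPolynomial.C F * T (-1)] fun i => LaurentPolynomial.C (X i))

section LaurentHom

variable (F : MvPolynomial σ K)

@[simp]
theorem laurentHom_X_inl_zero : laurentHom F (X (Sum.inl 0)) = T 1 := by
  simp [laurentHom]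

@[simp]
theorem laurentHom_X_inl_one : laurentHom F (X (Sum.inl 1)) = LaurentPolynomial.C F * T (-1) := by
  simp [laurentHom]

@[simp]
theorem laurentHom_rename (r : MvPolynomial σ K) :
    laurentHom F (rename Sum.inr r) = LaurentPolynomial.C r := by
  induction r using MvPolynomial.induction_on with
  | C a => simp [laurentHom]
  | add p q hp hq => simp [hp, hq]
  | mul_X p i hp =>
    rw [map_mul, map_mul, hp, rename_X]
    simp [laurentHom]

theorem laurentHom_polyInU (r : Polynomial (MvPolynomial σ K)) :
    laurentHom F (polyInU r) = Polynomial.toLaurent r := by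
  induction r using Polynomial.induction_on' with
  | add p q hp hq => simp [hp, hq]
  | monomial n a => simp [← Polynomial.C_mul_X_pow_eq_monomial]

theorem uvIdeal_le_ker_laurentHom : uvIdeal F ≤ RingHom.ker (laurentHom F) :=
  uvIdeal_le_ker <| by
    rw [map_sub, map_mul, laurentHom_X_inl_zero, laurentHom_X_inl_one, laurentHom_rename,
      mul_left_comm, ← T_add, add_neg_cancel, T_zero, mul_one, sub_self]

noncomputable def liftLaurent :
    (MvPolynomial (Fin 2 ⊕ σ) K ⧸ uvIdeal F) →ₐ[K] LaurentPolynomial (MvPolynomial σ K) :=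
  Ideal.Quotient.liftₐ _ (laurentHom F) (uvIdeal_le_ker_laurentHom F)

@[simp]
theorem liftLaurent_mk (p : MvPolynomial (Fin 2 ⊕ σ) K) :
    liftLaurent F (Ideal.Quotient.mk (uvIdeal F) p) = laurentHom F p :=
  Ideal.Quotient.lift_mk _ _ _

end LaurentHom

variable {F : MvPolynomial σ K}

theorem ker_laurentHom_le (hF : F ≠ 0) : RingHom.ker (laurentHom F) ≤ uvIdeal F := by
  intro p hp
  obtain ⟨N, r, hr⟩ := exists_X_pow_mul_eq_polyInU F p
  have hr0 : r = 0 := by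
    have h := congrArg (liftLaurent F) hr
    rw [liftLaurent_mk, liftLaurent_mk, map_mul, RingHom.mem_ker.mp hp, mul_zero,
      laurentHom_polyInU, eq_comm, Polynomial.toLaurent_eq_zero] at h
    exact h
  rw [hr0, map_zero, map_zero, Ideal.Quotient.eq_zero_iff_mem, uvIdeal,
    Ideal.mem_span_singleton] at hr
  exact Ideal.mem_span_singleton.mpr (X_prime.dvd_of_dvd_pow_mul (not_X_dvd_uv_sub hF) hr)

theorem liftLaurent_injective (hF : F ≠ 0) : Function.Injective (liftLaurent F) :=
  RingHom.lift_injective_of_ker_le_ideal _ _ (ker_laurentHom_le hF)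

theorem not_isUnit_mk_X_inl_zero {x : σ → K} (hx : eval x F = 0) :
    ¬IsUnit (Ideal.Quotient.mk (uvIdeal F) (X (Sum.inl 0))) := by
  let ev : MvPolynomial (Fin 2 ⊕ σ) K →ₐ[K] K := aeval (Sum.elim 0 x)
  have hev : uvIdeal F ≤ RingHom.ker ev := uvIdeal_le_ker <| by
    simp [ev, eval_rename, Function.comp_def, hx]
  intro hu
  have h0 := hu.map (Ideal.Quotient.liftₐ _ ev hev)
  change IsUnit (ev (X (Sum.inl 0))) at h0
  simp [ev] at h0

theorem isUnit_iff_eq_algebraMap (hF : F ≠ 0) {x : σ → K} (hx : eval x F = 0)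
    (y : MvPolynomial (Fin 2 ⊕ σ) K ⧸ uvIdeal F) :
    IsUnit y ↔ ∃ c : K, c ≠ 0 ∧ y = algebraMap K _ c := by
  refine ⟨fun hy => ?_, fun ⟨c, hc, hy⟩ => hy ▸ (isUnit_iff_ne_zero.mpr hc).map _⟩
  obtain ⟨r, k, hr, hk⟩ := exists_C_mul_T_of_isUnit (hy.map (liftLaurent F))
  obtain ⟨c, hc, rfl⟩ := isUnit_iff_eq_C_of_isReduced.mp hr
  set u := Ideal.Quotient.mk (uvIdeal F) (X (Sum.inl 0))
  have key : u ^ (-k).toNat * y = algebraMap K _ c * u ^ k.toNat := by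
    apply liftLaurent_injective hF
    simp only [u, map_mul, map_pow, AlgHom.commutes, liftLaurent_mk, laurentHom_X_inl_zero, hk,
      T_pow]
    rw [LaurentPolynomial.algebraMap_apply, MvPolynomial.algebraMap_eq, mul_left_comm, ← T_add]
    congr 2
    omega
  have hpow (n : ℕ) : IsUnit (u ^ n) ↔ n = 0 := by
    rcases eq_or_ne n 0 with rfl | hn
    · simp
    · simp [isUnit_pow_iff hn, hn, not_isUnit_mk_X_inl_zero hx, u]
  have hk0 : k = 0 := by
    have h := congrArg IsUnit key
    simp only [IsUnit.mul_iff, hpow, Int.toNat_eq_zero, Left.neg_nonpos_iff, hy, and_true,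
      hc.map (algebraMap K _), true_and, eq_iff_iff] at h
    omega
  subst hk0
  exact ⟨c, hc.ne_zero, by simpa using key⟩

end UVHypersurface

theorem hyperRing_units_general (n t : ℕ) (htpos : 0 < t) (f : Fin t → MvPolynomial (Fin n) ℂ)
    (hirr : ∀ i, Irreducible (f i))
    (a : Fin t → ℕ) (ha : ∀ i, 1 ≤ a i) :
    ∀ y : HyperRing n t f a, IsUnit y ↔
      ∃ c : ℂ, c ≠ 0 ∧ y = algebraMap ℂ (HyperRing n t f a) c := by
  set F := ∏ i, f i ^ a i
  have hideal : hyperIdeal n t f a = UVHypersurface.uvIdeal F := by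
    simp [hyperIdeal, UVHypersurface.uvIdeal, F, map_prod, map_pow]
  have hF : F ≠ 0 := Finset.prod_ne_zero_iff.mpr fun i _ => pow_ne_zero _ (hirr i).ne_zero
  have hFunit : ¬IsUnit F := by
    let i₀ : Fin t := ⟨0, htpos⟩
    have hdvd : f i₀ ∣ F :=
      (dvd_pow_self _ (Nat.one_le_iff_ne_zero.mp (ha i₀))).trans
        (Finset.dvd_prod_of_mem _ (Finset.mem_univ i₀))
    exact fun hu => (hirr i₀).not_isUnit (isUnit_of_dvd_unit hdvd hu)
  obtain ⟨x, hx⟩ := exists_eval_eq_zero_of_not_isUnit hFunit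
  unfold HyperRing
  rw [hideal]
  exact UVHypersurface.isUnit_iff_eq_algebraMap hF hx

/-- **Units of the hypersurface ring.**
For `A = ℂ[u,v,x₁,…,xₙ]/(uv - f₁^{a₁} ⋯ f_t^{a_t})` with the `fᵢ` non-constant
irreducible pairwise coprime polynomials and `aᵢ ≥ 1`, the group of units of `A` is
exactly `ℂ^×`: an element of `A` is a unit if and only if it is a nonzero constant. -/
theorem hyperRing_units (n t : ℕ) (htpos : 0 < t) (f : Fin t → MvPolynomial (Fin n) ℂ)
    (hirr : ∀ i, Irreducible (f i)) (hcop : ∀ i j, i ≠ j → IsRelPrime (f i) (f j))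
    (a : Fin t → ℕ) (ha : ∀ i, 1 ≤ a i) :
    ∀ y : HyperRing n t f a, IsUnit y ↔
      ∃ c : ℂ, c ≠ 0 ∧ y = algebraMap ℂ (HyperRing n t f a) c :=
  hyperRing_units_general n t htpos f hirr a ha
end

section
/- Let A = ℂ[u,v,x_1,...,x_n]/(uv − f_1^{a_1}···f_t^{a_t}) with f_i irreducible, pairwise coprime, non-constant, and a_i ≥ 1. For each i, the ideal 𝔭_i = (u, f_i) is a height one prime ideal of A, and the 𝔭_i are precisely the height one primes of A containing u. -/
universe u v

open MvPolynomial

/-- The ideal `𝔭ᵢ = (u, fᵢ)` of the hypersurface ring `A`. -/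
noncomputable def Pideal (n t : ℕ) (f : Fin t → MvPolynomial (Fin n) ℂ) (a : Fin t → ℕ)
    (i : Fin t) : Ideal (HyperRing n t f a) :=
  Ideal.span {Ideal.Quotient.mk (hyperIdeal n t f a) (X (Sum.inl 0)),
    Ideal.Quotient.mk (hyperIdeal n t f a) (rename Sum.inr (f i))}

/-!
Viewing `ℂ[u, v, x]` as `D[u]` with `D = ℂ[x][v]`, the relation `uv - ∏ fᵢ^aᵢ` is the linear
polynomial `v • u - g` with `v` prime in `D` and `v ∤ g`, hence prime, so `A` is a domain; and
`ℂ[u, v, x]/(u, fᵢ) ≅ (ℂ[x]/(fᵢ))[v]`, so `𝔭ᵢ` is prime and `v ∉ 𝔭ᵢ`. As `uv ∈ (fᵢ)` and `v ∉ 𝔭ᵢ`,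
every prime between `(fᵢ)` and `𝔭ᵢ` contains `u`, so `𝔭ᵢ` is minimal over the principal ideal
`(fᵢ)`; Krull's principal ideal theorem and `u ≠ 0` give height one. Conversely a prime `q ∋ u`
contains `uv = ∏ fᵢ^aᵢ`, hence some `fᵢ` and so `𝔭ᵢ`, and equal finite heights force `q = 𝔭ᵢ`.
-/

open Ideal

namespace Polynomial
variable {R : Type*} [CommRing R]

theorem prime_C_mul_X_sub_C [IsDomain R] [UniqueFactorizationMonoid R] {a b : R} (ha : Prime a)
    (hab : ¬a ∣ b) : Prime (C a * X - C b) := by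
  rw [← UniqueFactorizationMonoid.irreducible_iff_prime, sub_eq_add_neg, ← C_neg]
  exact irreducible_C_mul_X_add_C ha.ne_zero
    ((ha.irreducible.isRelPrime_iff_not_dvd).mpr (by rwa [dvd_neg]))

theorem isPrime_span_X_C {c : R} (hc : Prime c) : (span {X, C c} : Ideal R[X]).IsPrime := by
  have : (span {c}).IsPrime := (span_singleton_prime hc.ne_zero).mpr hc
  have h : (span {C c, X - C 0} : Ideal R[X]).IsPrime :=
    (Quotient.isDomain_iff_prime _).mp ((quotientSpanCXSubCAlgEquiv c 0).toMulEquiv.isDomain _)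
  simpa [Set.pair_comm] using h

theorem dvd_of_C_mem_span_X_C {c d : R} (h : C d ∈ (span {X, C c} : Ideal R[X])) : c ∣ d := by
  obtain ⟨p, q, hpq⟩ := mem_span_pair.mp h
  exact ⟨q.eval 0, by simpa [mul_comm] using congrArg (eval 0) hpq.symm⟩

end Polynomial

namespace MvPolynomial
variable (R σ : Type*) [CommRing R]

noncomputable def finTwoSumRingEquiv :
    MvPolynomial (Fin 2 ⊕ σ) R ≃+* Polynomial (MvPolynomial (Fin 1) (MvPolynomial σ R)) :=
  (sumAlgEquiv R (Fin 2) σ).toRingEquiv.trans (finSuccEquiv (MvPolynomial σ R) 1).toRingEquiv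

variable {R σ}

@[simp] theorem finTwoSumRingEquiv_X_inl_zero :
    finTwoSumRingEquiv R σ (X (.inl 0)) = Polynomial.X := by
  simp [finTwoSumRingEquiv, finSuccEquiv_X_zero]

@[simp] theorem finTwoSumRingEquiv_X_inl_one :
    finTwoSumRingEquiv R σ (X (.inl 1)) = Polynomial.C (X 0) := by
  simp [finTwoSumRingEquiv, ← finSuccEquiv_X_succ]

@[simp] theorem finTwoSumRingEquiv_rename_inr (p : MvPolynomial σ R) :
    finTwoSumRingEquiv R σ (rename .inr p) = Polynomial.C (C p) := by
  have h : sumAlgEquiv R (Fin 2) σ (rename .inr p) = C p :=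
    congrArg (· p) (sumAlgEquiv_comp_rename_inr R (Fin 2) σ)
  simpa [finTwoSumRingEquiv, h] using (finSuccEquiv (MvPolynomial σ R) 1).commutes p

theorem map_finTwoSumRingEquiv_span_X_rename (p : MvPolynomial σ R) :
    (Ideal.span {X (.inl 0), rename .inr p}).map (finTwoSumRingEquiv R σ) =
      Ideal.span {Polynomial.X, Polynomial.C (C p)} := by
  simp [Ideal.map_span, Set.image_pair]

theorem prime_X_mul_X_sub_rename [IsDomain R] [UniqueFactorizationMonoid R] [Finite σ]
    {g : MvPolynomial σ R} (hg : g ≠ 0) :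
    Prime (X (.inl 0) * X (.inl 1) - rename .inr g : MvPolynomial (Fin 2 ⊕ σ) R) := by
  rw [← MulEquiv.prime_iff (finTwoSumRingEquiv R σ)]
  have hX : ¬(X 0 : MvPolynomial (Fin 1) (MvPolynomial σ R)) ∣ C g := fun h ↦
    hg (zero_dvd_iff.mp (by simpa using map_dvd (constantCoeff (σ := Fin 1)) h))
  rw [map_sub, map_mul, finTwoSumRingEquiv_X_inl_zero, finTwoSumRingEquiv_X_inl_one,
    finTwoSumRingEquiv_rename_inr, Polynomial.X_mul]
  exact Polynomial.prime_C_mul_X_sub_C X_prime hX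

theorem isPrime_span_X_rename {p : MvPolynomial σ R} (hp : Prime p) :
    (Ideal.span {X (.inl 0), rename .inr p} : Ideal (MvPolynomial (Fin 2 ⊕ σ) R)).IsPrime := by
  have h := Polynomial.isPrime_span_X_C ((prime_C_iff (Fin 1)).mpr hp)
  rw [← map_finTwoSumRingEquiv_span_X_rename] at h
  rw [← Ideal.comap_map_of_bijective _ (finTwoSumRingEquiv R σ).bijective
    (I := Ideal.span {X (.inl 0), rename .inr p})]
  exact Ideal.comap_isPrime _ _

theorem X_inl_one_notMem_span_X_rename {p : MvPolynomial σ R} (hp : ¬IsUnit p) :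
    X (.inl 1) ∉
      (Ideal.span {X (.inl 0), rename .inr p} : Ideal (MvPolynomial (Fin 2 ⊕ σ) R)) := by
  intro h
  have hdvd : C p ∣ (X 0 : MvPolynomial (Fin 1) (MvPolynomial σ R)) :=
    Polynomial.dvd_of_C_mem_span_X_C (by
      simpa [map_finTwoSumRingEquiv_span_X_rename] using
        Ideal.mem_map_of_mem (finTwoSumRingEquiv R σ) h)
  exact hp (isUnit_of_dvd_one (by simpa using map_dvd (eval fun _ ↦ (1 : MvPolynomial σ R)) hdvd))

theorem X_inl_zero_notMem_span_X_mul_X_sub_rename [Nontrivial R] (g : MvPolynomial σ R) :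
    X (.inl 0) ∉ (Ideal.span {X (.inl 0) * X (.inl 1) - rename .inr g} :
      Ideal (MvPolynomial (Fin 2 ⊕ σ) R)) := by
  intro h
  have := map_dvd (aeval (R := R) (Sum.elim ![1, g] X)) (Ideal.mem_span_singleton.mp h)
  rw [map_sub, map_mul, aeval_rename, aeval_X, aeval_X, Sum.elim_comp_inr,
    aeval_X_left_apply] at this
  simp at this

end MvPolynomial

theorem dvd_prod_pow_of_ne_zero {ι M : Type*} [Fintype ι] [CommMonoid M] (w : ι → M)
    {a : ι → ℕ} {i : ι} (hi : a i ≠ 0) : w i ∣ ∏ j, w j ^ a j :=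
  (dvd_pow_self _ hi).trans (Finset.dvd_prod_of_mem _ (Finset.mem_univ i))

namespace Ideal
variable {R : Type*} [CommRing R]

theorem span_pair_mem_minimalPrimes_span_singleton {u v w : R} (hP : (span {u, w}).IsPrime)
    (hv : v ∉ span {u, w}) (hw : w ∣ u * v) : span {u, w} ∈ (span {w}).minimalPrimes := by
  refine ⟨⟨hP, span_mono (by simp)⟩, fun q ⟨hq, hwq⟩ hqP ↦ ?_⟩
  have hwq' : w ∈ q := hwq (mem_span_singleton_self w)
  have huq : u ∈ q :=
    (hq.mem_or_mem (q.mem_of_dvd hw hwq')).resolve_right fun h ↦ hv (hqP h)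
  simpa [span_le, Set.insert_subset_iff] using ⟨huq, hwq'⟩

variable [IsNoetherianRing R] [IsDomain R]

theorem height_span_pair_eq_one {u v w : R} (hP : (span {u, w}).IsPrime)
    (hv : v ∉ span {u, w}) (hw : w ∣ u * v) (hu : u ≠ 0) : (span {u, w}).height = 1 := by
  refine le_antisymm (height_le_one_of_isPrincipal_of_mem_minimalPrimes _ _
    (span_pair_mem_minimalPrimes_span_singleton hP hv hw)) ?_
  rw [Order.one_le_iff_pos, pos_iff_ne_zero, ne_eq, height_eq_zero_iff_eq_bot]
  exact fun h ↦ hu (by simpa [h] using subset_span (Set.mem_insert u {w}))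

variable {ι : Type*} [Fintype ι] {u v : R} {w : ι → R} {a : ι → ℕ}

theorem eq_span_pair_of_height_eq_one (huv : u * v = ∏ i, w i ^ a i) (ha : ∀ i, a i ≠ 0)
    (hP : ∀ i, (span {u, w i}).IsPrime) (hv : ∀ i, v ∉ span {u, w i}) (hu : u ≠ 0)
    {q : Ideal R} [hq : q.IsPrime] (huq : u ∈ q) (hq1 : q.height = 1) :
    ∃ i, q = span {u, w i} := by
  obtain ⟨i, -, hi⟩ := hq.prod_mem_iff.mp (huv ▸ q.mul_mem_right v huq)
  have hle : span {u, w i} ≤ q := by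
    simpa [span_le, Set.insert_subset_iff] using ⟨huq, hq.mem_of_pow_mem _ hi⟩
  have := hP i
  have hP1 := height_span_pair_eq_one (hP i) (hv i) (huv ▸ dvd_prod_pow_of_ne_zero w (ha i)) hu
  exact ⟨i, (eq_of_le_of_height_le _ hle (hq1.trans hP1.symm).le).symm⟩

end Ideal

namespace HyperRing

variable {n t : ℕ} {f : Fin t → MvPolynomial (Fin n) ℂ} {a : Fin t → ℕ}

theorem hyperIdeal_eq : hyperIdeal n t f a =
    span {X (.inl 0) * X (.inl 1) - rename .inr (∏ i, f i ^ a i)} := by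
  simp [hyperIdeal]

theorem isDomain (hf : ∀ i, f i ≠ 0) : IsDomain (HyperRing n t f a) := by
  have hg : ∏ i, f i ^ a i ≠ 0 := Finset.prod_ne_zero_iff.mpr fun i _ ↦ pow_ne_zero _ (hf i)
  have hprime := prime_X_mul_X_sub_rename hg
  rw [Quotient.isDomain_iff_prime, hyperIdeal_eq]
  exact (span_singleton_prime hprime.ne_zero).mpr hprime

theorem uElem_ne_zero : uElem n t f a ≠ 0 := by
  rw [uElem, ne_eq, Quotient.eq_zero_iff_mem, hyperIdeal_eq]
  exact X_inl_zero_notMem_span_X_mul_X_sub_rename _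

variable (f a) in
theorem uElem_mul_eq_prod :
    uElem n t f a * Ideal.Quotient.mk _ (X (.inl 1)) =
      ∏ i, Ideal.Quotient.mk (hyperIdeal n t f a) (rename .inr (f i)) ^ a i := by
  simp only [uElem, ← map_mul, ← map_pow, ← map_prod]
  exact Ideal.Quotient.eq.mpr (hyperIdeal_eq ▸ mem_span_singleton_self _)

theorem hyperIdeal_le_span {i : Fin t} (ha : a i ≠ 0) :
    hyperIdeal n t f a ≤ span {X (.inl 0), rename .inr (f i)} := by
  rw [hyperIdeal_eq, span_singleton_le_iff_mem]
  exact sub_mem (mul_mem_right _ _ (subset_span (by simp)))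
    (mem_of_dvd _ (map_dvd _ (dvd_prod_pow_of_ne_zero f ha)) (subset_span (by simp)))

theorem Pideal_eq_map (i : Fin t) :
    Pideal n t f a i = (span {X (.inl 0), rename .inr (f i)}).map (Ideal.Quotient.mk _) := by
  simp [Pideal, map_span, Set.image_pair]

theorem isPrime_Pideal {i : Fin t} (hf : Prime (f i)) (ha : a i ≠ 0) :
    (Pideal n t f a i).IsPrime := by
  have := isPrime_span_X_rename hf
  rw [Pideal_eq_map]
  exact map_isPrime_of_surjective Quotient.mk_surjective
    (by rw [mk_ker]; exact hyperIdeal_le_span ha)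

theorem mk_X_inl_one_notMem_Pideal {i : Fin t} (hf : ¬IsUnit (f i)) (ha : a i ≠ 0) :
    Ideal.Quotient.mk _ (X (.inl 1)) ∉ Pideal n t f a i := by
  rw [Pideal_eq_map, ← mem_comap, comap_map_of_surjective' _ Quotient.mk_surjective, mk_ker,
    sup_eq_left.mpr (hyperIdeal_le_span ha)]
  exact X_inl_one_notMem_span_X_rename hf

end HyperRing

theorem hyperRing_heightOne_primes_over_u_general (n t : ℕ) (f : Fin t → MvPolynomial (Fin n) ℂ)
    (hirr : ∀ i, Irreducible (f i))
    (a : Fin t → ℕ) (ha : ∀ i, 1 ≤ a i) :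
    (∀ i : Fin t, ∃ hp : (Pideal n t f a i).IsPrime,
        Order.height (⟨Pideal n t f a i, hp⟩ : PrimeSpectrum (HyperRing n t f a)) = 1) ∧
    (∀ (q : Ideal (HyperRing n t f a)) (hq : q.IsPrime), uElem n t f a ∈ q →
        Order.height (⟨q, hq⟩ : PrimeSpectrum (HyperRing n t f a)) = 1 →
        ∃ i : Fin t, q = Pideal n t f a i) := by
  have ha₀ i : a i ≠ 0 := Nat.one_le_iff_ne_zero.mp (ha i)
  have := HyperRing.isDomain (a := a) fun i ↦ (hirr i).ne_zero
  have hP i := HyperRing.isPrime_Pideal (a := a) (hirr i).prime (ha₀ i)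
  have hv i := HyperRing.mk_X_inl_one_notMem_Pideal (a := a) (hirr i).not_isUnit (ha₀ i)
  have huv := HyperRing.uElem_mul_eq_prod f a
  refine ⟨fun i ↦ ⟨hP i, ?_⟩, fun q hq huq hq1 ↦ ?_⟩
  · rw [← PrimeSpectrum.height_eq_orderHeight]
    exact Ideal.height_span_pair_eq_one (hP i) (hv i)
      (huv ▸ dvd_prod_pow_of_ne_zero _ (ha₀ i)) HyperRing.uElem_ne_zero
  · rw [← PrimeSpectrum.height_eq_orderHeight] at hq1
    exact Ideal.eq_span_pair_of_height_eq_one huv ha₀ hP hv HyperRing.uElem_ne_zero huq hq1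

/-- **The height one primes of `A` containing `u`.**
For `A = ℂ[u,v,x₁,…,xₙ]/(uv - f₁^{a₁} ⋯ f_t^{a_t})` with the `fᵢ` non-constant
irreducible pairwise coprime polynomials and `aᵢ ≥ 1`: each ideal `𝔭ᵢ = (u, fᵢ)` is a
height one prime ideal of `A`, and the `𝔭ᵢ` are precisely the height one primes of `A`
containing `u`. -/
theorem hyperRing_heightOne_primes_over_u (n t : ℕ) (f : Fin t → MvPolynomial (Fin n) ℂ)
    (hirr : ∀ i, Irreducible (f i)) (hcop : ∀ i j, i ≠ j → IsRelPrime (f i) (f j))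
    (a : Fin t → ℕ) (ha : ∀ i, 1 ≤ a i) :
    (∀ i : Fin t, ∃ hp : (Pideal n t f a i).IsPrime,
        Order.height (⟨Pideal n t f a i, hp⟩ : PrimeSpectrum (HyperRing n t f a)) = 1) ∧
    (∀ (q : Ideal (HyperRing n t f a)) (hq : q.IsPrime), uElem n t f a ∈ q →
        Order.height (⟨q, hq⟩ : PrimeSpectrum (HyperRing n t f a)) = 1 →
        ∃ i : Fin t, q = Pideal n t f a i) :=
  hyperRing_heightOne_primes_over_u_general n t f hirr a ha
end

section
/- Let A = ℂ[u,v,x_1,...,x_n]/(uv − f_1^{a_1}···f_t^{a_t}) with f_i irreducible, pairwise coprime, non-constant, a_i ≥ 1, and let 𝔭_i = (u, f_i). Then the valuation of u at 𝔭_i equals a_i, i.e. ν_{𝔭_i}(u) = a_i, so that div(u) = Σ_{i=1}^{t} a_i · 𝔭_i. -/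
universe u v

/-! ### Valuations at primes and the divisor class group -/

/-- The order (valuation) of `a` at the prime `p`: the supremum of the `n` such that `a`
lies in the `n`-th power of the maximal ideal `pR_p` of the localization `R_p`.  For the
localization at a height one prime of a normal noetherian domain, `R_p` is a discrete
valuation ring and this is the associated valuation `ν_p`. -/
noncomputable def ordAt (R : Type u) [CommRing R] (p : Ideal R) [p.IsPrime] (a : R) : ℕ∞ :=
  ⨆ n ∈ {n : ℕ | algebraMap R (Localization.AtPrime p) a ∈
      Ideal.map (algebraMap R (Localization.AtPrime p)) p ^ n}, (n : ℕ∞)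

/-- The set of height one primes of `R`. -/
def heightOnePrimes (R : Type u) [CommRing R] : Set (PrimeSpectrum R) :=
  { p | Order.height p = 1 }

open MvPolynomial

/-! In `A_{𝔭ᵢ}` the relation `u v = fᵢ^{aᵢ} ∏_{j ≠ i} f_j^{a_j}` exhibits `u` as `fᵢ^{aᵢ}` times a
unit, because `v` and the `f_j` with `j ≠ i` lie outside `𝔭ᵢ`; in particular `fᵢ` generates the
maximal ideal, and `ν_{𝔭ᵢ}(u) = aᵢ`. The ring-theoretic input comes from reading `ℂ[u,v,x]` as
`R[u][v]` with `R = ℂ[x]`: there `uv - g` is linear in `v` with coprime coefficients `u` and `-g`,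
so `A` is a domain, and `A/𝔭ᵢ ≅ (R/(fᵢ))[v]`, so `𝔭ᵢ` is prime. Any other height one prime
misses `u`: otherwise it contains some `f_j`, hence the nonzero prime `𝔭_j`, hence equals it. -/

section Valuation

variable {R : Type*} [CommRing R] {p : Ideal R} [p.IsPrime]

theorem ordAt_eq_of_mem_of_notMem {x : R} {k : ℕ}
    (hk : algebraMap R (Localization.AtPrime p) x ∈ p.map (algebraMap R _) ^ k)
    (hk1 : algebraMap R (Localization.AtPrime p) x ∉ p.map (algebraMap R _) ^ (k + 1)) :
    ordAt R p x = k := by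
  refine le_antisymm (iSup₂_le fun m hm => ?_) (le_iSup₂ (f := fun (m : ℕ) _ => (m : ℕ∞)) k hk)
  by_contra! hlt
  exact hk1 (Ideal.pow_le_pow_right (by exact_mod_cast hlt) hm)

theorem ordAt_eq_zero_of_notMem {x : R} (hx : x ∉ p) : ordAt R p x = 0 := by
  refine ordAt_eq_of_mem_of_notMem (by simp) ?_
  rw [zero_add, pow_one, Localization.AtPrime.map_eq_maximalIdeal,
    IsLocalization.AtPrime.to_map_mem_maximal_iff _ p]
  exact hx

theorem ordAt_eq_of_eq_pow_mul_unit [IsDomain R] {x π : R} {k : ℕ} (hπ : π ≠ 0)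
    (hmax : p.map (algebraMap R (Localization.AtPrime p)) =
      Ideal.span {algebraMap R (Localization.AtPrime p) π})
    {w : Localization.AtPrime p} (hw : IsUnit w)
    (hx : algebraMap R _ x = algebraMap R _ π ^ k * w) : ordAt R p x = k := by
  have hπ' : algebraMap R (Localization.AtPrime p) π ≠ 0 :=
    (IsLocalization.to_map_ne_zero_of_mem_nonZeroDivisors _ p.primeCompl_le_nonZeroDivisors
      (mem_nonZeroDivisors_of_ne_zero hπ))
  have hπ_nonunit : ¬IsUnit (algebraMap R (Localization.AtPrime p) π) := by
    have : algebraMap R _ π ∈ IsLocalRing.maximalIdeal (Localization.AtPrime p) := by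
      rw [← Localization.AtPrime.map_eq_maximalIdeal, hmax]
      exact Ideal.mem_span_singleton_self _
    exact (IsLocalRing.mem_maximalIdeal _).mp this
  refine ordAt_eq_of_mem_of_notMem ?_ ?_ <;>
    rw [hmax, Ideal.span_singleton_pow, Ideal.mem_span_singleton, hx]
  · exact dvd_mul_right _ _
  · rw [pow_succ, mul_dvd_mul_iff_left (pow_ne_zero k hπ')]
    exact fun hdvd => hπ_nonunit (isUnit_of_dvd_unit hdvd hw)

theorem Ideal.map_span_pair_eq_span_singleton {S : Type*} [CommRing S] (φ : R →+* S) {x y : R}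
    (h : φ y ∣ φ x) : (Ideal.span {x, y}).map φ = Ideal.span {φ y} := by
  rw [Ideal.map_span, Set.image_pair]
  exact Submodule.span_insert_eq_span (Ideal.mem_span_singleton.mpr h)

theorem ordAt_eq_of_mul_eq_pow_mul [IsDomain R] {x y π r : R} {k : ℕ}
    (hp : p = Ideal.span {x, π}) (hxy : x * y = π ^ k * r) (hy : y ∉ p) (hr : r ∉ p)
    (hπ : π ≠ 0) (hk : 1 ≤ k) : ordAt R p x = k := by
  set φ := algebraMap R (Localization.AtPrime p)
  have hyu : IsUnit (φ y) := IsLocalization.map_units _ (⟨y, hy⟩ : p.primeCompl)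
  have hx : φ x = φ π ^ k * (φ r * ↑hyu.unit⁻¹) := by
    rw [← mul_assoc, Units.eq_mul_inv_iff_mul_eq, IsUnit.unit_spec, ← map_pow, ← map_mul,
      ← map_mul, hxy]
  have hmax : p.map φ = Ideal.span {φ π} := by
    refine (congrArg (Ideal.map φ) hp).trans (Ideal.map_span_pair_eq_span_singleton φ ?_)
    rw [hx, ← Nat.sub_add_cancel hk, pow_succ, mul_assoc]
    exact dvd_mul_of_dvd_right (dvd_mul_right _ _) _
  exact ordAt_eq_of_eq_pow_mul_unit hπ hmax
    ((IsLocalization.map_units _ (⟨r, hr⟩ : p.primeCompl)).mul hyu.unit⁻¹.isUnit) hx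

end Valuation

theorem PrimeSpectrum.eq_of_le_of_height_eq_one {R : Type*} [CommRing R] [IsDomain R]
    {P Q : PrimeSpectrum R} (hP : P.asIdeal ≠ ⊥) (hPQ : P ≤ Q) (hQ : Order.height Q = 1) :
    P = Q := by
  by_contra hne
  have := Order.one_lt_height_iff.mpr ⟨P, ⊥, bot_lt_iff_ne_bot.mpr ?_, lt_of_le_of_ne hPQ hne⟩
  · exact this.ne' hQ
  · exact fun h => hP (congrArg PrimeSpectrum.asIdeal h)

open Polynomial Polynomial.Bivariate

section Bivariate

variable {R : Type*} [CommRing R]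

theorem Polynomial.C_mem_span_X_C_iff {a b : R} :
    C a ∈ (Ideal.span {X, C b} : Ideal R[X]) ↔ a ∈ Ideal.span {b} := by
  refine ⟨fun h => ?_, fun h => ?_⟩
  · have := Ideal.mem_map_of_mem (evalRingHom 0) h
    rwa [Ideal.map_span, Set.image_pair, coe_evalRingHom, eval_X, eval_C, eval_C,
      Ideal.span_insert_zero] at this
  · obtain ⟨c, rfl⟩ := Ideal.mem_span_singleton.mp h
    rw [map_mul]
    exact Ideal.mul_mem_right _ _ (Ideal.subset_span (Set.mem_insert_of_mem _ rfl))

theorem Polynomial.isPrime_span_X_C_s12 {b : R} (hb : Prime b) :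
    (Ideal.span {X, C b} : Ideal R[X]).IsPrime := by
  have : (Ideal.span {b}).IsPrime := (Ideal.span_singleton_prime hb.ne_zero).mpr hb
  have e := quotientSpanCXSubCAlgEquiv b 0
  rw [map_zero, sub_zero, Set.pair_comm] at e
  rw [← Ideal.Quotient.isDomain_iff_prime]
  exact e.toMulEquiv.isDomain

variable [IsDomain R]

theorem Polynomial.Bivariate.C_notMem_span_C_X_mul_Y_sub (g : R) {s : R[X]} (hs : s ≠ 0) :
    C s ∉ Ideal.span {C X * Y - C (C g)} := fun h => by
  have hdeg : (C X * Y - C (C g)).degree = 1 := by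
    rw [sub_eq_add_neg, ← map_neg, degree_linear X_ne_zero]
  have := (degree_le_of_dvd (Ideal.mem_span_singleton.mp h) (C_ne_zero.mpr hs)).trans degree_C_le
  rw [hdeg] at this
  exact absurd this (by decide)

variable [UniqueFactorizationMonoid R]

theorem Polynomial.Bivariate.prime_C_X_mul_Y_sub {g : R} (hg : g ≠ 0) :
    Prime (C X * Y - C (C g) : R[X][Y]) := by
  rw [← UniqueFactorizationMonoid.irreducible_iff_prime, sub_eq_add_neg, ← map_neg]
  refine irreducible_C_mul_X_add_C X_ne_zero ((irreducible_X.isRelPrime_iff_not_dvd).mpr ?_)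
  rw [X_dvd_iff, coeff_neg, coeff_C_zero, neg_eq_zero]
  exact hg

end Bivariate

namespace MvPolynomial

variable (k σ : Type*) [CommRing k]

noncomputable def sumFinTwoEquiv : MvPolynomial (Fin 2 ⊕ σ) k ≃+* (MvPolynomial σ k)[X][Y] :=
  (sumAlgEquiv k (Fin 2) σ).toRingEquiv.trans
    (equivMvPolynomial (MvPolynomial σ k)).symm.toRingEquiv

variable {k σ}

@[simp]
theorem sumFinTwoEquiv_X_inl_zero :
    sumFinTwoEquiv k σ (X (Sum.inl 0)) = Polynomial.C Polynomial.X := by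
  simp [sumFinTwoEquiv, sumAlgEquiv_X_inl]

@[simp]
theorem sumFinTwoEquiv_X_inl_one : sumFinTwoEquiv k σ (X (Sum.inl 1)) = Y := by
  simp [sumFinTwoEquiv, sumAlgEquiv_X_inl]

@[simp]
theorem sumFinTwoEquiv_rename_inr (p : MvPolynomial σ k) :
    sumFinTwoEquiv k σ (rename Sum.inr p) = Polynomial.C (Polynomial.C p) := by
  have := DFunLike.congr_fun (sumAlgEquiv_comp_rename_inr k (Fin 2) σ) p
  simp_all [sumFinTwoEquiv]

theorem span_X_inl_zero_rename_inr_eq_comap (b : MvPolynomial σ k) :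
    Ideal.span {X (Sum.inl (0 : Fin 2)), rename Sum.inr b} =
      ((Ideal.span {Polynomial.X, Polynomial.C b}).map Polynomial.C).comap
        (sumFinTwoEquiv k σ) := by
  have hu : (sumFinTwoEquiv k σ).symm (Polynomial.C Polynomial.X) = X (Sum.inl 0) := by
    rw [RingEquiv.symm_apply_eq, sumFinTwoEquiv_X_inl_zero]
  have hb : (sumFinTwoEquiv k σ).symm (Polynomial.C (Polynomial.C b)) = rename Sum.inr b := by
    rw [RingEquiv.symm_apply_eq, sumFinTwoEquiv_rename_inr]
  rw [← Ideal.map_symm, Ideal.map_span, Ideal.map_span, Set.image_pair, Set.image_pair]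
  simp [hu, hb]

theorem isPrime_span_X_inl_zero_rename_inr {b : MvPolynomial σ k} (hb : Prime b) :
    (Ideal.span {X (Sum.inl (0 : Fin 2)), rename Sum.inr b}).IsPrime := by
  have := Polynomial.isPrime_span_X_C_s12 hb
  rw [span_X_inl_zero_rename_inr_eq_comap]
  exact Ideal.comap_isPrime _ _

theorem X_inl_one_notMem_span_X_inl_zero_rename_inr {b : MvPolynomial σ k} (hb : Prime b) :
    X (Sum.inl (1 : Fin 2)) ∉ Ideal.span {X (Sum.inl (0 : Fin 2)), rename Sum.inr b} := by
  rw [span_X_inl_zero_rename_inr_eq_comap, Ideal.mem_comap,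
    sumFinTwoEquiv_X_inl_one, Ideal.mem_map_C_iff]
  intro h
  have := h 1
  rw [Polynomial.coeff_X_one, ← Ideal.eq_top_iff_one] at this
  exact (Polynomial.isPrime_span_X_C_s12 hb).ne_top this

theorem rename_inr_mem_span_X_inl_zero_rename_inr_iff {b c : MvPolynomial σ k} :
    rename Sum.inr c ∈ Ideal.span {X (Sum.inl (0 : Fin 2)), rename Sum.inr b} ↔ b ∣ c := by
  rw [span_X_inl_zero_rename_inr_eq_comap, Ideal.mem_comap,
    sumFinTwoEquiv_rename_inr, ← Ideal.mem_span_singleton, ← Polynomial.C_mem_span_X_C_iff]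
  refine ⟨fun h => by simpa using Ideal.mem_map_C_iff.mp h 0, Ideal.mem_map_of_mem _⟩

end MvPolynomial

section Hypersurface

variable {n t : ℕ} {f : Fin t → MvPolynomial (Fin n) ℂ} {a : Fin t → ℕ}

local notation "E" => sumFinTwoEquiv ℂ (Fin n)

theorem hyperIdeal_eq_comap :
    hyperIdeal n t f a = (Ideal.span {Polynomial.C Polynomial.X * Y -
      Polynomial.C (Polynomial.C (∏ i, f i ^ a i))}).comap E := by
  rw [← Ideal.map_symm, Ideal.map_span, Set.image_singleton, hyperIdeal]
  congr 2
  apply (E).injective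
  simp [map_prod]

theorem hyperIdeal_isPrime (hf : ∀ i, f i ≠ 0) : (hyperIdeal n t f a).IsPrime := by
  have hg : ∏ i, f i ^ a i ≠ 0 := Finset.prod_ne_zero_iff.mpr fun i _ => pow_ne_zero _ (hf i)
  have := (Ideal.span_singleton_prime (prime_C_X_mul_Y_sub hg).ne_zero).mpr
    (prime_C_X_mul_Y_sub hg)
  rw [hyperIdeal_eq_comap]
  exact Ideal.comap_isPrime _ _

theorem mk_ne_zero_of_sumFinTwoEquiv_eq_C {x : MvPolynomial (Fin 2 ⊕ Fin n) ℂ}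
    {s : (MvPolynomial (Fin n) ℂ)[X]} (hs : s ≠ 0) (hx : E x = Polynomial.C s) :
    Ideal.Quotient.mk (hyperIdeal n t f a) x ≠ 0 := by
  rw [Ne, Ideal.Quotient.eq_zero_iff_mem, hyperIdeal_eq_comap, Ideal.mem_comap, hx]
  exact C_notMem_span_C_X_mul_Y_sub _ hs

theorem uElem_ne_zero : uElem n t f a ≠ 0 :=
  mk_ne_zero_of_sumFinTwoEquiv_eq_C Polynomial.X_ne_zero (sumFinTwoEquiv_X_inl_zero)

theorem mk_rename_inr_ne_zero {p : MvPolynomial (Fin n) ℂ} (hp : p ≠ 0) :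
    Ideal.Quotient.mk (hyperIdeal n t f a) (rename Sum.inr p) ≠ 0 :=
  mk_ne_zero_of_sumFinTwoEquiv_eq_C (Polynomial.C_ne_zero.mpr hp) (sumFinTwoEquiv_rename_inr p)

variable (n t f a) in
theorem uElem_mul_mk_X_inl_one :
    uElem n t f a * Ideal.Quotient.mk (hyperIdeal n t f a) (X (Sum.inl 1)) =
      ∏ j, Ideal.Quotient.mk (hyperIdeal n t f a) (rename Sum.inr (f j)) ^ a j := by
  rw [uElem, ← map_mul, (by simp only [map_prod, map_pow] :
    ∏ j, Ideal.Quotient.mk (hyperIdeal n t f a) (rename Sum.inr (f j)) ^ a j =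
      Ideal.Quotient.mk _ (∏ j, rename Sum.inr (f j) ^ a j))]
  exact Ideal.Quotient.eq.mpr (Ideal.subset_span rfl)

theorem hyperIdeal_le_span {i : Fin t} (hai : 1 ≤ a i) :
    hyperIdeal n t f a ≤ Ideal.span {X (Sum.inl 0), rename Sum.inr (f i)} := by
  rw [hyperIdeal, Ideal.span_le, Set.singleton_subset_iff]
  refine Ideal.sub_mem _ (Ideal.mul_mem_right _ _ (Ideal.subset_span (Set.mem_insert _ _)))
    (Ideal.mem_of_dvd _ ?_ (Ideal.subset_span (Set.mem_insert_of_mem _ rfl)))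
  exact (dvd_pow_self _ (by omega)).trans (Finset.dvd_prod_of_mem _ (Finset.mem_univ i))

theorem Pideal_eq_map (i : Fin t) : Pideal n t f a i =
    (Ideal.span {X (Sum.inl 0), rename Sum.inr (f i)}).map
      (Ideal.Quotient.mk (hyperIdeal n t f a)) := by
  rw [Ideal.map_span, Set.image_pair, Pideal]

theorem Pideal_isPrime {i : Fin t} (hi : Prime (f i)) (hai : 1 ≤ a i) :
    (Pideal n t f a i).IsPrime := by
  have := isPrime_span_X_inl_zero_rename_inr hi
  rw [Pideal_eq_map]
  exact Ideal.map_isPrime_of_surjective Ideal.Quotient.mk_surjective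
    (by rw [Ideal.mk_ker]; exact hyperIdeal_le_span hai)

theorem mk_mem_Pideal_iff {i : Fin t} (hai : 1 ≤ a i) {x : MvPolynomial (Fin 2 ⊕ Fin n) ℂ} :
    Ideal.Quotient.mk _ x ∈ Pideal n t f a i ↔
      x ∈ Ideal.span {X (Sum.inl 0), rename Sum.inr (f i)} := by
  rw [Pideal_eq_map]
  exact Ideal.mem_quotient_iff_mem (hyperIdeal_le_span hai)

theorem ordAt_Pideal_uElem (hirr : ∀ i, Irreducible (f i))
    (hcop : ∀ i j, i ≠ j → IsRelPrime (f i) (f j)) (ha : ∀ i, 1 ≤ a i) (i : Fin t)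
    [(Pideal n t f a i).IsPrime] : ordAt _ (Pideal n t f a i) (uElem n t f a) = a i := by
  have := hyperIdeal_isPrime (a := a) fun j => (hirr j).ne_zero
  set mk := Ideal.Quotient.mk (hyperIdeal n t f a)
  have hr : ∏ j ∈ Finset.univ.erase i, mk (rename Sum.inr (f j)) ^ a j ∉ Pideal n t f a i := by
    rintro (hmem : _ ∈ Pideal n t f a i)
    obtain ⟨j, hj, hfj⟩ := Ideal.IsPrime.prod_mem_iff.mp hmem
    have hdvd : f i ∣ f j := rename_inr_mem_span_X_inl_zero_rename_inr_iff.mp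
      ((mk_mem_Pideal_iff (ha i)).mp (Ideal.IsPrime.mem_of_pow_mem ‹_› _ hfj))
    exact (hirr i).not_isUnit (hcop i j (Finset.ne_of_mem_erase hj).symm dvd_rfl hdvd)
  refine ordAt_eq_of_mul_eq_pow_mul (y := mk (X (Sum.inl 1))) rfl ?_ ?_ hr
    (mk_rename_inr_ne_zero (hirr i).ne_zero) (ha i)
  · rw [uElem_mul_mk_X_inl_one, ← Finset.mul_prod_erase _ _ (Finset.mem_univ i)]
  · rw [mk_mem_Pideal_iff (ha i)]
    exact X_inl_one_notMem_span_X_inl_zero_rename_inr (hirr i).prime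

theorem uElem_notMem_of_height_eq_one (hirr : ∀ i, Irreducible (f i)) (ha : ∀ i, 1 ≤ a i)
    {q : PrimeSpectrum (HyperRing n t f a)} (hq : Order.height q = 1)
    (hne : ∀ i, q.asIdeal ≠ Pideal n t f a i) : uElem n t f a ∉ q.asIdeal := by
  have := hyperIdeal_isPrime (a := a) fun j => (hirr j).ne_zero
  intro hu
  have hprod := uElem_mul_mk_X_inl_one n t f a ▸ q.asIdeal.mul_mem_right _ hu
  obtain ⟨j, -, hj⟩ := Ideal.IsPrime.prod_mem_iff.mp hprod
  have hle : Pideal n t f a j ≤ q.asIdeal := Ideal.span_le.mpr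
    (Set.insert_subset hu (Set.singleton_subset_iff.mpr (q.isPrime.mem_of_pow_mem _ hj)))
  have hu_mem : uElem n t f a ∈ Pideal n t f a j := Ideal.subset_span (Set.mem_insert _ _)
  have hne_bot : Pideal n t f a j ≠ ⊥ := fun h =>
    uElem_ne_zero (by rwa [h, Ideal.mem_bot] at hu_mem)
  exact hne j (congrArg PrimeSpectrum.asIdeal (PrimeSpectrum.eq_of_le_of_height_eq_one
    (P := ⟨_, Pideal_isPrime (hirr j).prime (ha j)⟩) hne_bot hle hq)).symm

end Hypersurface

/-- **`div(u) = ∑ᵢ aᵢ · 𝔭ᵢ` in the hypersurface ring.**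
For `A = ℂ[u,v,x₁,…,xₙ]/(uv - f₁^{a₁} ⋯ f_t^{a_t})` with the `fᵢ` non-constant
irreducible pairwise coprime polynomials and `aᵢ ≥ 1`, and `𝔭ᵢ = (u, fᵢ)`:
the valuation of `u` at `𝔭ᵢ` equals `aᵢ`, i.e. `ν_{𝔭ᵢ}(u) = aᵢ`, and the valuation of
`u` at every other height one prime vanishes; that is, `div(u) = ∑_{i=1}^t aᵢ · 𝔭ᵢ`. -/
theorem hyperRing_div_u (n t : ℕ) (f : Fin t → MvPolynomial (Fin n) ℂ)
    (hirr : ∀ i, Irreducible (f i)) (hcop : ∀ i j, i ≠ j → IsRelPrime (f i) (f j))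
    (a : Fin t → ℕ) (ha : ∀ i, 1 ≤ a i) :
    (∀ i : Fin t, ∃ hp : (Pideal n t f a i).IsPrime,
        @ordAt (HyperRing n t f a) _ (Pideal n t f a i) hp (uElem n t f a) =
          (a i : ℕ∞)) ∧
    (∀ (q : Ideal (HyperRing n t f a)) (hq : q.IsPrime),
        Order.height (⟨q, hq⟩ : PrimeSpectrum (HyperRing n t f a)) = 1 →
        (∀ i : Fin t, q ≠ Pideal n t f a i) →
        @ordAt (HyperRing n t f a) _ q hq (uElem n t f a) = 0) := by
  refine ⟨fun i => ?_, fun q hq hheight hne => ?_⟩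
  · have := Pideal_isPrime (a := a) (hirr i).prime (ha i)
    exact ⟨this, ordAt_Pideal_uElem hirr hcop ha i⟩
  · exact ordAt_eq_zero_of_notMem (uElem_notMem_of_height_eq_one hirr ha hheight hne)
end
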